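/- arXiv:1710.10986 — 2 statements merged into one kernel-verified Lean document; each statement's English description precedes it below -/
import Mathlib

section
/- Let q, r : ℝ × ℝ → ℂ be smooth, let λ₁ ∈ ℂ, and suppose (φ110, φ111, φ120, φ121) is a solution of the Lax system of the Frobenius NLS equation at spectral parameter λ₁ for potentials (q,r). Then the quadruple (φ210, φ211, φ220, φ221) := (−conj(φ120), −conj(φ121), conj(φ110), conj(φ111)) is a solution of the same Lax system at spectral parameter λ₂ = conj(λ₁). -/
open Complex

/-- Partial derivative in `x` of a function of `(x,t)`. -/
noncomputable def pX (f : ℝ → ℝ → ℂ) : ℝ → ℝ → ℂ := fun x t => deriv (fun x' => f x' t) x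

/-- Partial derivative in `t` of a function of `(x,t)`. -/
noncomputable def pT (f : ℝ → ℝ → ℂ) : ℝ → ℝ → ℂ := fun x t => deriv (fun t' => f x t') t

/-- The Lax system of the Frobenius NLS equation at spectral parameter `lam` for
potentials `(q, r)`, for the quadruple of functions `(p110, p111, p120, p121)` of `(x,t)`. -/
def FrobeniusLaxSolution (q r : ℝ → ℝ → ℂ) (lam : ℂ)
    (p110 p111 p120 p121 : ℝ → ℝ → ℂ) : Prop :=
  ∀ x t : ℝ,
    pX p110 x t = -I * lam * p110 x t + q x t * p120 x t ∧
    pX p111 x t = -I * lam * p111 x t + q x t * p121 x t + r x t * p120 x t ∧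
    pX p120 x t = I * lam * p120 x t - (starRingEnd ℂ) (q x t) * p110 x t ∧
    pX p121 x t = I * lam * p121 x t - (starRingEnd ℂ) (q x t) * p111 x t
      - (starRingEnd ℂ) (r x t) * p110 x t ∧
    pT p110 x t = (-2 * I * lam ^ 2 + I * q x t * (starRingEnd ℂ) (q x t)) * p110 x t
      + (2 * q x t * lam + I * pX q x t) * p120 x t ∧
    pT p111 x t = (-2 * I * lam ^ 2 + I * q x t * (starRingEnd ℂ) (q x t)) * p111 x t
      + I * ((starRingEnd ℂ) (q x t) * r x t + q x t * (starRingEnd ℂ) (r x t)) * p110 x t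
      + (2 * q x t * lam + I * pX q x t) * p121 x t
      + (2 * r x t * lam + I * pX r x t) * p120 x t ∧
    pT p120 x t = (-2 * (starRingEnd ℂ) (q x t) * lam
        + I * pX (fun x' t' => (starRingEnd ℂ) (q x' t')) x t) * p110 x t
      + (2 * I * lam ^ 2 - I * q x t * (starRingEnd ℂ) (q x t)) * p120 x t ∧
    pT p121 x t = (-2 * (starRingEnd ℂ) (q x t) * lam
        + I * pX (fun x' t' => (starRingEnd ℂ) (q x' t')) x t) * p111 x t
      + (-2 * (starRingEnd ℂ) (r x t) * lam
        + I * pX (fun x' t' => (starRingEnd ℂ) (r x' t')) x t) * p110 x t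
      + (2 * I * lam ^ 2 - I * q x t * (starRingEnd ℂ) (q x t)) * p121 x t
      - I * ((starRingEnd ℂ) (q x t) * r x t + q x t * (starRingEnd ℂ) (r x t)) * p120 x t

/-!
Conjugation commutes with `∂x` and `∂t`, so conjugating the system at `λ₁` gives a system at
`conj λ₁`. The Lax matrices satisfy `conj U(λ) = σ U(conj λ) σ⁻¹` with `σ = [[0, -1], [1, 0]]`
(likewise for `V`, and for the blocks carrying `r`), and `σ² = -1`; hence `φ ↦ σ conj φ`, i.e.
`(φ₁, φ₂) ↦ (-conj φ₂, conj φ₁)` componentwise, maps solutions at `λ₁` to solutions at `conj λ₁`.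
-/

-- No differentiability is needed: when `f` is not differentiable both sides are the junk value `0`.
theorem pX_conj (f : ℝ → ℝ → ℂ) (x t : ℝ) :
    pX (fun x' t' => (starRingEnd ℂ) (f x' t')) x t = (starRingEnd ℂ) (pX f x t) :=
  deriv.star

theorem pT_conj (f : ℝ → ℝ → ℂ) (x t : ℝ) :
    pT (fun x' t' => (starRingEnd ℂ) (f x' t')) x t = (starRingEnd ℂ) (pT f x t) :=
  deriv.star

theorem pX_neg (f : ℝ → ℝ → ℂ) (x t : ℝ) : pX (fun x' t' => -f x' t') x t = -pX f x t :=
  deriv.fun_neg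

theorem pT_neg (f : ℝ → ℝ → ℂ) (x t : ℝ) : pT (fun x' t' => -f x' t') x t = -pT f x t :=
  deriv.fun_neg

theorem statement4_general (q r : ℝ → ℝ → ℂ)
    (lam1 : ℂ) (p110 p111 p120 p121 : ℝ → ℝ → ℂ)
    (h : FrobeniusLaxSolution q r lam1 p110 p111 p120 p121) :
    FrobeniusLaxSolution q r ((starRingEnd ℂ) lam1)
      (fun x t => -(starRingEnd ℂ) (p120 x t))
      (fun x t => -(starRingEnd ℂ) (p121 x t))
      (fun x t => (starRingEnd ℂ) (p110 x t))
      (fun x t => (starRingEnd ℂ) (p111 x t)) := by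
  intro x t
  obtain ⟨h1, h2, h3, h4, h5, h6, h7, h8⟩ := h x t
  refine ⟨?_, ?_, ?_, ?_, ?_, ?_, ?_, ?_⟩ <;>
    simp only [pX_neg, pT_neg, pX_conj, pT_conj, h1, h2, h3, h4, h5, h6, h7, h8,
      map_add, map_sub, map_mul, map_neg, map_pow, map_ofNat, conj_I, conj_conj] <;>
    ring

/-- if `(φ110, φ111, φ120, φ121)` solves the Lax system of the Frobenius NLS
equation at `λ₁`, then `(−conj φ120, −conj φ121, conj φ110, conj φ111)` solves the same Lax
system at `λ₂ = conj λ₁`. -/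
theorem statement4 (q r : ℝ → ℝ → ℂ)
    (hq : ContDiff ℝ (⊤ : ℕ∞) (fun p : ℝ × ℝ => q p.1 p.2))
    (hr : ContDiff ℝ (⊤ : ℕ∞) (fun p : ℝ × ℝ => r p.1 p.2))
    (lam1 : ℂ) (p110 p111 p120 p121 : ℝ → ℝ → ℂ)
    (h : FrobeniusLaxSolution q r lam1 p110 p111 p120 p121) :
    FrobeniusLaxSolution q r ((starRingEnd ℂ) lam1)
      (fun x t => -(starRingEnd ℂ) (p120 x t))
      (fun x t => -(starRingEnd ℂ) (p121 x t))
      (fun x t => (starRingEnd ℂ) (p110 x t))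
      (fun x t => (starRingEnd ℂ) (p111 x t)) :=
  statement4_general q r lam1 p110 p111 p120 p121 h
end

section
/- Let a, c, d ∈ ℝ with c ≠ 0, set b = 2c² − a² and ρ(x,t) = ax + bt, and let q = c·e^{iρ}, r = i·d·e^{iρ}. Let λ ∈ ℂ, let R ∈ ℂ satisfy R² = −a² − 4aλ − 4c² − 4λ², and let n₁, k₁ ∈ ℂ. Define ξ(x,t) = R·(x/2 + (λ − a/2)t) and ψ110 = n₁·e^{iρ/2 + ξ}, ψ111 = k₁·e^{iρ/2 + ξ}, ψ120 = ((ai + 2iλ + R)·n₁/(2c))·e^{−iρ/2 + ξ}, ψ121 = (((aci + 2ciλ + Rc)·k₁ + (ad + 2dλ − iRd)·n₁)/(2c²))·e^{−iρ/2 + ξ}. Then (ψ110, ψ111, ψ120, ψ121) is a solution of the Lax system of the Frobenius NLS equation at spectral parameter λ for the potentials (q,r). -/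
open Complex

noncomputable def planeWave (A μ ν : ℂ) : ℝ → ℝ → ℂ := fun x t => A * exp (μ * x + ν * t)

theorem pX_planeWave (A μ ν : ℂ) (x t : ℝ) :
    pX (planeWave A μ ν) x t = μ * planeWave A μ ν x t := by
  have h : HasDerivAt (fun x' : ℝ => μ * x' + ν * t) μ x := by
    simpa using (ofRealCLM.hasDerivAt (x := x)).const_mul μ |>.add_const (ν * t)
  show deriv (fun x' : ℝ => A * exp (μ * x' + ν * t)) x = μ * (A * exp (μ * x + ν * t))
  rw [(h.cexp.const_mul A).deriv]
  ring

theorem pT_planeWave (A μ ν : ℂ) (x t : ℝ) :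
    pT (planeWave A μ ν) x t = ν * planeWave A μ ν x t := by
  have h : HasDerivAt (fun t' : ℝ => μ * x + ν * t') ν t := by
    simpa using (ofRealCLM.hasDerivAt (x := t)).const_mul ν |>.const_add (μ * x)
  show deriv (fun t' : ℝ => A * exp (μ * x + ν * t')) t = ν * (A * exp (μ * x + ν * t))
  rw [(h.cexp.const_mul A).deriv]
  ring

theorem conj_planeWave (A μ ν : ℂ) (x t : ℝ) :
    starRingEnd ℂ (planeWave A μ ν x t) =
      planeWave (starRingEnd ℂ A) (starRingEnd ℂ μ) (starRingEnd ℂ ν) x t := by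
  simp only [planeWave, map_mul, ← exp_conj, map_add, conj_ofReal]

/-- The Lax system for `q = Q e^{i(ax+bt)}`, `r = S e^{i(ax+bt)}`, `ψ11j = Nj e^{μx+νt}`,
`ψ12j = Mj e^{(μ-ia)x+(ν-ib)t}`, divided by the common exponential of each equation; the factor
`2λ - a` is `2λ + i·(ia)`, from `∂x q = ia q`. -/
def FrobeniusLaxAmplitudes (Q S : ℂ) (a b : ℝ) (lam μ ν N0 N1 M0 M1 : ℂ) : Prop :=
  μ * N0 = -I * lam * N0 + Q * M0 ∧
  μ * N1 = -I * lam * N1 + Q * M1 + S * M0 ∧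
  (μ - I * a) * M0 = I * lam * M0 - starRingEnd ℂ Q * N0 ∧
  (μ - I * a) * M1 = I * lam * M1 - starRingEnd ℂ Q * N1 - starRingEnd ℂ S * N0 ∧
  ν * N0 = (-2 * I * lam ^ 2 + I * Q * starRingEnd ℂ Q) * N0 + (2 * lam - a) * Q * M0 ∧
  ν * N1 = (-2 * I * lam ^ 2 + I * Q * starRingEnd ℂ Q) * N1
    + I * (starRingEnd ℂ Q * S + Q * starRingEnd ℂ S) * N0
    + (2 * lam - a) * Q * M1 + (2 * lam - a) * S * M0 ∧
  (ν - I * b) * M0 = -(2 * lam - a) * starRingEnd ℂ Q * N0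
    + (2 * I * lam ^ 2 - I * Q * starRingEnd ℂ Q) * M0 ∧
  (ν - I * b) * M1 = -(2 * lam - a) * starRingEnd ℂ Q * N1 - (2 * lam - a) * starRingEnd ℂ S * N0
    + (2 * I * lam ^ 2 - I * Q * starRingEnd ℂ Q) * M1
    - I * (starRingEnd ℂ Q * S + Q * starRingEnd ℂ S) * M0

theorem frobeniusLaxSolution_planeWave {Q S : ℂ} {a b : ℝ} {lam μ ν N0 N1 M0 M1 : ℂ}
    (h : FrobeniusLaxAmplitudes Q S a b lam μ ν N0 N1 M0 M1) :
    FrobeniusLaxSolution (planeWave Q (I * a) (I * b)) (planeWave S (I * a) (I * b)) lam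
      (planeWave N0 μ ν) (planeWave N1 μ ν)
      (planeWave M0 (μ - I * a) (ν - I * b)) (planeWave M1 (μ - I * a) (ν - I * b)) := by
  obtain ⟨h1, h2, h3, h4, h5, h6, h7, h8⟩ := h
  intro x t
  simp only [conj_planeWave, map_mul, conj_I, conj_ofReal, pX_planeWave, pT_planeWave]
  simp only [planeWave]
  have hsplit : exp (μ * x + ν * t) =
      exp (I * a * x + I * b * t) * exp ((μ - I * a) * x + (ν - I * b) * t) := by
    rw [← exp_add]; ring_nf
  have hphase : exp (-I * a * x + -I * b * t) * exp (I * a * x + I * b * t) = 1 := by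
    rw [← exp_add]; ring_nf; exact exp_zero
  rw [hsplit]
  generalize exp (I * a * x + I * b * t) = P at hphase ⊢
  generalize exp (-I * a * x + -I * b * t) = P' at hphase ⊢
  generalize exp ((μ - I * a) * x + (ν - I * b) * t) = E
  refine ⟨?_, ?_, ?_, ?_, ?_, ?_, ?_, ?_⟩
  · linear_combination P * E * h1
  · linear_combination P * E * h2
  · linear_combination E * h3 + E * starRingEnd ℂ Q * N0 * hphase
  · linear_combination E * h4 + E * (starRingEnd ℂ Q * N1 + starRingEnd ℂ S * N0) * hphase
  · linear_combination P * E * h5 - I * P * E * Q * starRingEnd ℂ Q * N0 * hphase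
      - P * E * a * Q * M0 * I_sq
  · linear_combination P * E * h6
      - I * P * E * (Q * starRingEnd ℂ Q * N1 + (Q * starRingEnd ℂ S + starRingEnd ℂ Q * S) * N0)
        * hphase
      - P * E * a * (Q * M1 + S * M0) * I_sq
  · linear_combination E * h7
      + E * (I * Q * M0 + (2 * lam - a) * N0) * starRingEnd ℂ Q * hphase
      + E * a * starRingEnd ℂ Q * N0 * P' * P * I_sq
  · linear_combination E * h8
      + E * (I * Q * starRingEnd ℂ Q * M1 + I * (starRingEnd ℂ Q * S + starRingEnd ℂ S * Q) * M0
        + (2 * lam - a) * (starRingEnd ℂ Q * N1 + starRingEnd ℂ S * N0)) * hphase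
      + E * a * (starRingEnd ℂ Q * N1 + starRingEnd ℂ S * N0) * P' * P * I_sq

theorem frobeniusLaxAmplitudes_of_sq_eq {a b c d : ℝ} (hc : c ≠ 0) (hb : b = 2 * c ^ 2 - a ^ 2)
    {lam R : ℂ} (hR : R ^ 2 = -(a : ℂ) ^ 2 - 4 * (a : ℂ) * lam - 4 * (c : ℂ) ^ 2 - 4 * lam ^ 2)
    (n1 k1 : ℂ) :
    FrobeniusLaxAmplitudes c (I * d) a b lam
      ((I * a + R) / 2) (I * b / 2 + R * (lam - a / 2)) n1 k1
      ((a * I + 2 * I * lam + R) * n1 / (2 * c))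
      (((a * c * I + 2 * c * I * lam + R * c) * k1 + (a * d + 2 * d * lam - I * R * d) * n1)
        / (2 * c ^ 2)) := by
  subst hb
  have hc' : (c : ℂ) ≠ 0 := ofReal_ne_zero.mpr hc
  replace hR : R ^ 2 + (a + 2 * lam) ^ 2 = -4 * c ^ 2 := by linear_combination hR
  simp only [FrobeniusLaxAmplitudes, map_mul, conj_ofReal, conj_I]
  push_cast
  refine ⟨?_, ?_, ?_, ?_, ?_, ?_, ?_, ?_⟩ <;> field_simp <;> grind [I_sq]

/-- the explicit eigenfunctions built from the periodic seed
`q = c e^{iρ}`, `r = i d e^{iρ}` (with `ρ = ax + bt`, `b = 2c² − a²`) and a square root `R`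
of `−a² − 4aλ − 4c² − 4λ²` solve the Lax system of the Frobenius NLS equation at `λ`. -/
theorem statement11 (a c d : ℝ) (hc : c ≠ 0) (b : ℝ) (hb : b = 2 * c ^ 2 - a ^ 2)
    (ρ : ℝ → ℝ → ℝ) (hρ : ∀ x t : ℝ, ρ x t = a * x + b * t)
    (q r : ℝ → ℝ → ℂ)
    (hq : ∀ x t : ℝ, q x t = (c : ℂ) * Complex.exp (I * (ρ x t : ℂ)))
    (hr : ∀ x t : ℝ, r x t = I * (d : ℂ) * Complex.exp (I * (ρ x t : ℂ)))
    (lam R n1 k1 : ℂ)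
    (hR : R ^ 2 = -(a : ℂ) ^ 2 - 4 * (a : ℂ) * lam - 4 * (c : ℂ) ^ 2 - 4 * lam ^ 2)
    (ξ : ℝ → ℝ → ℂ)
    (hξ : ∀ x t : ℝ, ξ x t = R * ((x : ℂ) / 2 + (lam - (a : ℂ) / 2) * (t : ℂ)))
    (ψ110 ψ111 ψ120 ψ121 : ℝ → ℝ → ℂ)
    (h110 : ∀ x t : ℝ, ψ110 x t = n1 * Complex.exp (I * (ρ x t : ℂ) / 2 + ξ x t))
    (h111 : ∀ x t : ℝ, ψ111 x t = k1 * Complex.exp (I * (ρ x t : ℂ) / 2 + ξ x t))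
    (h120 : ∀ x t : ℝ, ψ120 x t =
      (((a : ℂ) * I + 2 * I * lam + R) * n1 / (2 * (c : ℂ)))
        * Complex.exp (-(I * (ρ x t : ℂ)) / 2 + ξ x t))
    (h121 : ∀ x t : ℝ, ψ121 x t =
      ((((a : ℂ) * (c : ℂ) * I + 2 * (c : ℂ) * I * lam + R * (c : ℂ)) * k1
          + ((a : ℂ) * (d : ℂ) + 2 * (d : ℂ) * lam - I * R * (d : ℂ)) * n1) / (2 * (c : ℂ) ^ 2))
        * Complex.exp (-(I * (ρ x t : ℂ)) / 2 + ξ x t)) :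
    FrobeniusLaxSolution q r lam ψ110 ψ111 ψ120 ψ121 := by
  -- each of the six functions is the plane wave it is matched with
  convert frobeniusLaxSolution_planeWave (frobeniusLaxAmplitudes_of_sq_eq (d := d) hc hb hR n1 k1)
    using 1 <;>
    funext x t <;> simp only [planeWave, hq, hr, h110, h111, h120, h121, hρ, hξ] <;> push_cast <;>
    ring_nf
end
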